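/- Let α = (α₁,α₂) : ℝ² → ℝ² be smooth and compactly supported. Let 𝒜 be its Jacobian matrix, 𝒜ᵢⱼ = ∂αᵢ/∂xⱼ; set H = (H₁,H₂) = (∂₂α₂, −∂₁α₂), det𝒜 = (∂₁α₁)(∂₂α₂) − (∂₂α₁)(∂₁α₂), and b = ∂₁α₁ + ∂₂α₂ + det𝒜 (so b = tr𝒜 + det𝒜). Then ∫_{ℝ²} |∇H|² dx + ∫_{ℝ²} |∇b|² dx = ∫_{ℝ²} (∇(b+H₁) − ∂₁H) · Δα dx + ∫_{ℝ²} ∇b · ∇(det𝒜) dx, where |∇H|² = Σ_{i,j=1}^{2} (∂ⱼHᵢ)², |∇b|² = (∂₁b)² + (∂₂b)², ∂₁H is the componentwise x₁-derivative of H, Δα = (Δα₁, Δα₂) is the componentwise Laplacian of α, ∇φ = (∂₁φ, ∂₂φ) for scalar φ, and · denotes the dot product in ℝ². -/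

import Mathlib

open MeasureTheory

/-- Partial derivative in the first coordinate of `ℝ²`. -/
noncomputable def pd1 (f : ℝ × ℝ → ℝ) : ℝ × ℝ → ℝ := fun x => fderiv ℝ f x (1, 0)

/-- Partial derivative in the second coordinate of `ℝ²`. -/
noncomputable def pd2 (f : ℝ × ℝ → ℝ) : ℝ × ℝ → ℝ := fun x => fderiv ℝ f x (0, 1)

/-- The Laplacian `Δ = ∂₁₁ + ∂₂₂` on `ℝ²`. -/
noncomputable def lap (f : ℝ × ℝ → ℝ) : ℝ × ℝ → ℝ :=
  fun x => pd1 (pd1 f) x + pd2 (pd2 f) x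

section Aux

variable {f g : ℝ × ℝ → ℝ}

lemma pdv_contDiff (v : ℝ × ℝ) (hf : ContDiff ℝ (⊤ : ℕ∞) f) :
    ContDiff ℝ (⊤ : ℕ∞) (fun x => fderiv ℝ f x v) :=
  (hf.fderiv_right (by simp)).clm_apply contDiff_const

lemma pd1_contDiff (hf : ContDiff ℝ (⊤ : ℕ∞) f) : ContDiff ℝ (⊤ : ℕ∞) (pd1 f) := pdv_contDiff _ hf
lemma pd2_contDiff (hf : ContDiff ℝ (⊤ : ℕ∞) f) : ContDiff ℝ (⊤ : ℕ∞) (pd2 f) := pdv_contDiff _ hf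

lemma pdv_supp (v : ℝ × ℝ) (hc : HasCompactSupport f) :
    HasCompactSupport (fun x => fderiv ℝ f x v) :=
  (hc.fderiv ℝ).comp_left (g := fun L : (ℝ × ℝ) →L[ℝ] ℝ => L v) rfl

lemma pd1_supp (hc : HasCompactSupport f) : HasCompactSupport (pd1 f) := pdv_supp _ hc
lemma pd2_supp (hc : HasCompactSupport f) : HasCompactSupport (pd2 f) := pdv_supp _ hc

lemma dAt (hf : ContDiff ℝ (⊤ : ℕ∞) f) (x : ℝ × ℝ) : DifferentiableAt ℝ f x :=
  (hf.differentiable (by simp)) x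

lemma ibp (v : ℝ × ℝ) (hf : ContDiff ℝ (⊤ : ℕ∞) f) (hg : ContDiff ℝ (⊤ : ℕ∞) g)
    (hcf : HasCompactSupport f) (hcg : HasCompactSupport g) :
    ∫ x, fderiv ℝ f x v * g x = - ∫ x, f x * fderiv ℝ g x v := by
  obtain ⟨C, hC⟩ := hf.lipschitzWith_of_hasCompactSupport hcf (by simp)
  obtain ⟨D, hD⟩ := hg.lipschitzWith_of_hasCompactSupport hcg (by simp)
  have A := LipschitzWith.integral_lineDeriv_mul_eq (μ := volume) hC hD hcg v
  have e1 : ∀ x : ℝ × ℝ, lineDeriv ℝ f x v = fderiv ℝ f x v := fun x =>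
    ((hf.differentiable (by simp)) x).lineDeriv_eq_fderiv
  have e2 : ∀ x : ℝ × ℝ, lineDeriv ℝ g x (-v) = -fderiv ℝ g x v := fun x => by
    rw [((hg.differentiable (by simp)) x).lineDeriv_eq_fderiv, map_neg]
  simp only [e1, e2, neg_mul] at A
  rw [A, ← integral_neg]
  congr 1; funext x; ring

lemma ibp1 (hf : ContDiff ℝ (⊤ : ℕ∞) f) (hg : ContDiff ℝ (⊤ : ℕ∞) g)
    (hcf : HasCompactSupport f) (hcg : HasCompactSupport g) :
    ∫ x, pd1 f x * g x = - ∫ x, f x * pd1 g x :=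
  ibp (1, 0) hf hg hcf hcg

lemma ibp2 (hf : ContDiff ℝ (⊤ : ℕ∞) f) (hg : ContDiff ℝ (⊤ : ℕ∞) g)
    (hcf : HasCompactSupport f) (hcg : HasCompactSupport g) :
    ∫ x, pd2 f x * g x = - ∫ x, f x * pd2 g x :=
  ibp (0, 1) hf hg hcf hcg

lemma pd_comm (hf : ContDiff ℝ (⊤ : ℕ∞) f) : pd1 (pd2 f) = pd2 (pd1 f) := by
  funext x
  have hd : ∀ y, HasFDerivAt f (fderiv ℝ f y) y := fun y =>
    ((hf.differentiable (by simp)) y).hasFDerivAt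
  have hd2 : DifferentiableAt ℝ (fderiv ℝ f) x :=
    ((hf.fderiv_right (m := (⊤ : ℕ∞)) (by simp)).differentiable (by simp)) x
  have hsym := second_derivative_symmetric hd hd2.hasFDerivAt (0, 1) (1, 0)
  have e : ∀ v w : ℝ × ℝ, fderiv ℝ (fun y => fderiv ℝ f y v) x w =
      fderiv ℝ (fderiv ℝ f) x w v := by
    intro v w
    rw [fderiv_clm_apply hd2 (differentiableAt_const v)]
    simp
  show fderiv ℝ (fun y => fderiv ℝ f y (0, 1)) x (1, 0)
      = fderiv ℝ (fun y => fderiv ℝ f y (1, 0)) x (0, 1)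
  rw [e, e]
  exact hsym.symm

lemma pd1_add {x : ℝ × ℝ} (hf : DifferentiableAt ℝ f x) (hg : DifferentiableAt ℝ g x) :
    pd1 (fun y => f y + g y) x = pd1 f x + pd1 g x := by
  simp [pd1, fderiv_fun_add hf hg]

lemma pd2_add {x : ℝ × ℝ} (hf : DifferentiableAt ℝ f x) (hg : DifferentiableAt ℝ g x) :
    pd2 (fun y => f y + g y) x = pd2 f x + pd2 g x := by
  simp [pd2, fderiv_fun_add hf hg]

lemma pd1_neg {x : ℝ × ℝ} : pd1 (fun y => -(f y)) x = -(pd1 f x) := by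
  simp [pd1, fderiv_neg]

lemma pd2_neg {x : ℝ × ℝ} : pd2 (fun y => -(f y)) x = -(pd2 f x) := by
  simp [pd2, fderiv_neg]

lemma integ_mul {u v : ℝ × ℝ → ℝ} (hu : ContDiff ℝ (⊤ : ℕ∞) u) (hv : ContDiff ℝ (⊤ : ℕ∞) v)
    (hcu : HasCompactSupport u) : Integrable (fun x => u x * v x) :=
  (hu.continuous.mul hv.continuous).integrable_of_hasCompactSupport hcu.mul_right

lemma hcs_mul {u v : ℝ × ℝ → ℝ} (hu : HasCompactSupport u) :
    HasCompactSupport (fun x => u x * v x) := hu.mul_right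

lemma hcs_sub {u v : ℝ × ℝ → ℝ} (hu : HasCompactSupport u) (hv : HasCompactSupport v) :
    HasCompactSupport (fun x => u x - v x) := hu.comp₂_left hv (sub_zero 0)

lemma hcs_add {u v : ℝ × ℝ → ℝ} (hu : HasCompactSupport u) (hv : HasCompactSupport v) :
    HasCompactSupport (fun x => u x + v x) := hu.comp₂_left hv (add_zero 0)

end Aux

/-- The key energy identity (18) of Section 2.1:
`∫ |∇H|² + ∫ |∇b|² = ∫ (∇(b+H₁) − ∂₁H)·Δα + ∫ ∇b·∇det𝒜`,
where `H = (∂₂α₂, −∂₁α₂)`, `det𝒜 = ∂₁α₁∂₂α₂ − ∂₂α₁∂₁α₂` and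
`b = tr𝒜 + det𝒜`. -/
theorem energy_identity_18
    (α1 α2 : ℝ × ℝ → ℝ)
    (h1 : ContDiff ℝ (⊤ : ℕ∞) α1) (h2 : ContDiff ℝ (⊤ : ℕ∞) α2)
    (hc1 : HasCompactSupport α1) (hc2 : HasCompactSupport α2)
    (H1 H2 detA b : ℝ × ℝ → ℝ)
    (hH1 : H1 = pd2 α2) (hH2 : H2 = fun x => -(pd1 α2 x))
    (hdet : detA = fun x => pd1 α1 x * pd2 α2 x - pd2 α1 x * pd1 α2 x)
    (hb : b = fun x => pd1 α1 x + pd2 α2 x + detA x) :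
    (∫ x : ℝ × ℝ,
        (pd1 H1 x ^ 2 + pd2 H1 x ^ 2 + pd1 H2 x ^ 2 + pd2 H2 x ^ 2))
      + (∫ x : ℝ × ℝ, (pd1 b x ^ 2 + pd2 b x ^ 2))
      = (∫ x : ℝ × ℝ,
          ((pd1 (fun y => b y + H1 y) x - pd1 H1 x) * lap α1 x
            + (pd2 (fun y => b y + H1 y) x - pd1 H2 x) * lap α2 x))
        + (∫ x : ℝ × ℝ, (pd1 b x * pd1 detA x + pd2 b x * pd2 detA x)) := by
  -- basic smoothness and support facts
  have sa1x := pd1_contDiff h1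
  have sa1y := pd2_contDiff h1
  have sa2x := pd1_contDiff h2
  have sa2y := pd2_contDiff h2
  have ca1x := pd1_supp hc1
  have ca1y := pd2_supp hc1
  have ca2x := pd1_supp hc2
  have ca2y := pd2_supp hc2
  have sdet : ContDiff ℝ (⊤ : ℕ∞) detA := by
    rw [hdet]; exact (sa1x.mul sa2y).sub (sa1y.mul sa2x)
  have cdet : HasCompactSupport detA := by
    rw [hdet]; exact hcs_sub (hcs_mul ca1x) (hcs_mul ca1y)
  have sb : ContDiff ℝ (⊤ : ℕ∞) b := by
    rw [hb]; exact (sa1x.add sa2y).add sdet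
  have cb : HasCompactSupport b := by
    rw [hb]; exact hcs_add (hcs_add ca1x ca2y) cdet
  have sH1 : ContDiff ℝ (⊤ : ℕ∞) H1 := by rw [hH1]; exact sa2y
  have sb1 := pd1_contDiff sb
  have sb2 := pd2_contDiff sb
  have cb1 := pd1_supp cb
  have cb2 := pd2_supp cb
  -- expansions of the derivatives of b
  have hB1 : ∀ x, pd1 b x = pd1 (pd1 α1) x + pd1 (pd2 α2) x + pd1 detA x := by
    intro x
    rw [hb]
    calc pd1 (fun y => pd1 α1 y + pd2 α2 y + detA y) x
        = pd1 (fun y => pd1 α1 y + pd2 α2 y) x + pd1 detA x :=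
          pd1_add (dAt (sa1x.add sa2y) x) (dAt sdet x)
      _ = pd1 (pd1 α1) x + pd1 (pd2 α2) x + pd1 detA x := by
          rw [pd1_add (dAt sa1x x) (dAt sa2y x)]
  have hB2 : ∀ x, pd2 b x = pd1 (pd2 α1) x + pd2 (pd2 α2) x + pd2 detA x := by
    intro x
    rw [hb]
    calc pd2 (fun y => pd1 α1 y + pd2 α2 y + detA y) x
        = pd2 (fun y => pd1 α1 y + pd2 α2 y) x + pd2 detA x :=
          pd2_add (dAt (sa1x.add sa2y) x) (dAt sdet x)
      _ = pd2 (pd1 α1) x + pd2 (pd2 α2) x + pd2 detA x := by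
          rw [pd2_add (dAt sa1x x) (dAt sa2y x)]
      _ = pd1 (pd2 α1) x + pd2 (pd2 α2) x + pd2 detA x := by
          rw [pd_comm h1]
  -- the integrands in a normalised form
  set J1 : ℝ × ℝ → ℝ := fun x =>
    2 * (pd1 (pd2 α2) x * pd1 (pd2 α2) x)
      + pd2 (pd2 α2) x * pd2 (pd2 α2) x + pd1 (pd1 α2) x * pd1 (pd1 α2) x with hJ1
  set J2 : ℝ × ℝ → ℝ := fun x => pd1 b x * pd1 b x + pd2 b x * pd2 b x with hJ2
  set J3 : ℝ × ℝ → ℝ := fun x =>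
    pd1 b x * (pd1 (pd1 α1) x + pd2 (pd2 α1) x)
      + (pd2 b x + (pd1 (pd1 α2) x + pd2 (pd2 α2) x))
        * (pd1 (pd1 α2) x + pd2 (pd2 α2) x) with hJ3
  set J4 : ℝ × ℝ → ℝ := fun x =>
    pd1 b x * pd1 detA x + pd2 b x * pd2 detA x with hJ4
  -- rewrite the four integrals
  have g1' : (∫ x : ℝ × ℝ,
      (pd1 H1 x ^ 2 + pd2 H1 x ^ 2 + pd1 H2 x ^ 2 + pd2 H2 x ^ 2)) = ∫ x, J1 x := by
    congr 1; funext x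
    rw [hH1, hH2, hJ1]
    simp only [pd1_neg, pd2_neg]
    rw [← pd_comm h2]
    ring
  have g2' : (∫ x : ℝ × ℝ, (pd1 b x ^ 2 + pd2 b x ^ 2)) = ∫ x, J2 x := by
    congr 1; funext x; rw [hJ2]; ring
  have g3' : (∫ x : ℝ × ℝ,
      ((pd1 (fun y => b y + H1 y) x - pd1 H1 x) * lap α1 x
        + (pd2 (fun y => b y + H1 y) x - pd1 H2 x) * lap α2 x)) = ∫ x, J3 x := by
    congr 1; funext x
    rw [pd1_add (dAt sb x) (dAt sH1 x), pd2_add (dAt sb x) (dAt sH1 x), hH1, hH2, hJ3]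
    simp only [pd1_neg, lap]
    ring
  have g4' : (∫ x : ℝ × ℝ,
      (pd1 b x * pd1 detA x + pd2 b x * pd2 detA x)) = ∫ x, J4 x := by
    congr 1
  rw [g1', g2', g3', g4']
  -- integrability
  have i1 : Integrable J1 := by
    rw [hJ1]
    exact (((integ_mul (pd1_contDiff sa2y) (pd1_contDiff sa2y) (pd1_supp ca2y)).const_mul 2).add
      (integ_mul (pd2_contDiff sa2y) (pd2_contDiff sa2y) (pd2_supp ca2y))).add
        (integ_mul (pd1_contDiff sa2x) (pd1_contDiff sa2x) (pd1_supp ca2x))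
  have i2 : Integrable J2 := by
    rw [hJ2]; exact (integ_mul sb1 sb1 cb1).add (integ_mul sb2 sb2 cb2)
  have i3 : Integrable J3 := by
    rw [hJ3]
    exact (integ_mul sb1 ((pd1_contDiff sa1x).add (pd2_contDiff sa1y)) cb1).add
      (integ_mul (u := fun x => pd2 b x + (pd1 (pd1 α2) x + pd2 (pd2 α2) x))
        (sb2.add ((pd1_contDiff sa2x).add (pd2_contDiff sa2y)))
        ((pd1_contDiff sa2x).add (pd2_contDiff sa2y))
        (hcs_add cb2 (hcs_add (pd1_supp ca2x) (pd2_supp ca2y))))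
  have i4 : Integrable J4 := by
    rw [hJ4]
    exact (integ_mul sb1 (pd1_contDiff sdet) cb1).add (integ_mul sb2 (pd2_contDiff sdet) cb2)
  -- the three integration-by-parts identities
  have K1 : (∫ x, pd1 (pd1 α2) x * pd2 (pd2 α2) x)
      = ∫ x, pd1 (pd2 α2) x * pd1 (pd2 α2) x := by
    calc (∫ x, pd1 (pd1 α2) x * pd2 (pd2 α2) x)
        = - ∫ x, pd1 α2 x * pd1 (pd2 (pd2 α2)) x :=
          ibp1 sa2x (pd2_contDiff sa2y) ca2x (pd2_supp ca2y)
      _ = - ∫ x, pd1 α2 x * pd2 (pd1 (pd2 α2)) x := by rw [pd_comm sa2y]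
      _ = ∫ x, pd2 (pd1 α2) x * pd1 (pd2 α2) x :=
          (ibp2 sa2x (pd1_contDiff sa2y) ca2x (pd1_supp ca2y)).symm
      _ = ∫ x, pd1 (pd2 α2) x * pd1 (pd2 α2) x := by rw [← pd_comm h2]
  have K2 : (∫ x, pd2 (pd2 α1) x * pd1 b x) = ∫ x, pd1 (pd2 α1) x * pd2 b x := by
    calc (∫ x, pd2 (pd2 α1) x * pd1 b x)
        = - ∫ x, pd2 α1 x * pd2 (pd1 b) x := ibp2 sa1y sb1 ca1y cb1
      _ = - ∫ x, pd2 α1 x * pd1 (pd2 b) x := by rw [← pd_comm sb]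
      _ = ∫ x, pd1 (pd2 α1) x * pd2 b x :=
          (ibp1 sa1y sb2 ca1y cb2).symm
  have K3 : (∫ x, pd1 (pd1 α2) x * pd2 b x) = ∫ x, pd1 (pd2 α2) x * pd1 b x := by
    calc (∫ x, pd1 (pd1 α2) x * pd2 b x)
        = - ∫ x, pd1 α2 x * pd1 (pd2 b) x := ibp1 sa2x sb2 ca2x cb2
      _ = - ∫ x, pd1 α2 x * pd2 (pd1 b) x := by rw [pd_comm sb]
      _ = ∫ x, pd2 (pd1 α2) x * pd1 b x :=
          (ibp2 sa2x sb1 ca2x cb1).symm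
      _ = ∫ x, pd1 (pd2 α2) x * pd1 b x := by rw [← pd_comm h2]
  -- the pointwise identity collapsing everything
  have e : (fun x => J3 x + J4 x - (J1 x + J2 x))
      = fun x => (pd2 (pd2 α1) x * pd1 b x - pd1 (pd2 α1) x * pd2 b x)
          + (pd1 (pd1 α2) x * pd2 b x - pd1 (pd2 α2) x * pd1 b x)
          + 2 * (pd1 (pd1 α2) x * pd2 (pd2 α2) x - pd1 (pd2 α2) x * pd1 (pd2 α2) x) := by
    funext x
    rw [hJ1, hJ2, hJ3, hJ4]
    simp only
    rw [hB1 x, hB2 x]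
    ring
  have hz : (∫ x, (J3 x + J4 x - (J1 x + J2 x))) = 0 := by
    rw [e]
    have ia : Integrable (fun x => pd2 (pd2 α1) x * pd1 b x - pd1 (pd2 α1) x * pd2 b x) :=
      (integ_mul (pd2_contDiff sa1y) sb1 (pd2_supp ca1y)).sub
        (integ_mul (pd1_contDiff sa1y) sb2 (pd1_supp ca1y))
    have ib : Integrable (fun x => pd1 (pd1 α2) x * pd2 b x - pd1 (pd2 α2) x * pd1 b x) :=
      (integ_mul (pd1_contDiff sa2x) sb2 (pd1_supp ca2x)).sub
        (integ_mul (pd1_contDiff sa2y) sb1 (pd1_supp ca2y))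
    have ic : Integrable (fun x =>
        pd1 (pd1 α2) x * pd2 (pd2 α2) x - pd1 (pd2 α2) x * pd1 (pd2 α2) x) :=
      (integ_mul (pd1_contDiff sa2x) (pd2_contDiff sa2y) (pd1_supp ca2x)).sub
        (integ_mul (pd1_contDiff sa2y) (pd1_contDiff sa2y) (pd1_supp ca2y))
    have iab : Integrable (fun x =>
        (pd2 (pd2 α1) x * pd1 b x - pd1 (pd2 α1) x * pd2 b x)
          + (pd1 (pd1 α2) x * pd2 b x - pd1 (pd2 α2) x * pd1 b x)) := ia.add ib
    have ic2 : Integrable (fun x =>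
        2 * (pd1 (pd1 α2) x * pd2 (pd2 α2) x - pd1 (pd2 α2) x * pd1 (pd2 α2) x)) :=
      ic.const_mul 2
    rw [integral_add iab ic2, integral_add ia ib, integral_const_mul,
      integral_sub (integ_mul (pd2_contDiff sa1y) sb1 (pd2_supp ca1y))
        (integ_mul (pd1_contDiff sa1y) sb2 (pd1_supp ca1y)),
      integral_sub (integ_mul (pd1_contDiff sa2x) sb2 (pd1_supp ca2x))
        (integ_mul (pd1_contDiff sa2y) sb1 (pd1_supp ca2y)),
      integral_sub (integ_mul (pd1_contDiff sa2x) (pd2_contDiff sa2y) (pd1_supp ca2x))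
        (integ_mul (pd1_contDiff sa2y) (pd1_contDiff sa2y) (pd1_supp ca2y)),
      K1, K2, K3]
    ring
  have hsplit : (∫ x, (J3 x + J4 x - (J1 x + J2 x)))
      = ((∫ x, J3 x) + (∫ x, J4 x)) - ((∫ x, J1 x) + (∫ x, J2 x)) := by
    have i34 : Integrable (fun x => J3 x + J4 x) := i3.add i4
    have i12 : Integrable (fun x => J1 x + J2 x) := i1.add i2
    rw [integral_sub i34 i12, integral_add i3 i4, integral_add i1 i2]
  linarith [hz, hsplit]
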